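/- Let v ∈ BV(ℝ^{n−1}) ∩ L^∞(ℝ^{n−1}) with v ≥ 0, let b : ℝ^{n−1} → ℝ be a GBV function, and set u₁ = b − v/2, u₂ = b + v/2. Then for H^{n−2}-a.e. x in J_v ∩ J_b with ν_b(x) = ν_v(x) and [b](x) = [v](x)/2, the point x does not belong to the jump set J_{u₁} of u₁. -/

import Mathlib

open scoped RealInnerProductSpace ENNReal
open Metric Set MeasureTheory Filter

variable {d : ℕ}

/-- The set `A` has density `0` at the point `x`. -/
def HasDensityZeroAt (A : Set (EuclideanSpace ℝ (Fin d)))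
    (x : EuclideanSpace ℝ (Fin d)) : Prop :=
  Tendsto (fun ρ : ℝ => volume (A ∩ Metric.ball x ρ) / volume (Metric.ball x ρ))
    (nhdsWithin 0 (Set.Ioi 0)) (nhds 0)

/-- `t` is the approximate limit of `f` at `x` with respect to the set `A`. -/
def ApLim (f : EuclideanSpace ℝ (Fin d) → ℝ) (A : Set (EuclideanSpace ℝ (Fin d)))
    (x : EuclideanSpace ℝ (Fin d)) (t : ℝ) : Prop :=
  ∀ ε : ℝ, 0 < ε → HasDensityZeroAt {y ∈ A | ε < |f y - t|} x

/-- `x` is an (approximate) jump point of `f` with jump direction `ν`, approximate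
upper limit `fup` and approximate lower limit `flo`. -/
def IsJumpPt (f : EuclideanSpace ℝ (Fin d) → ℝ) (x ν : EuclideanSpace ℝ (Fin d))
    (fup flo : ℝ) : Prop :=
  ‖ν‖ = 1 ∧ flo < fup ∧
    ApLim f {y | 0 ≤ ⟪y - x, ν⟫} x fup ∧ ApLim f {y | ⟪y - x, ν⟫ ≤ 0} x flo

/-- The jump set `J_f` of `f`. -/
def jumpSet (f : EuclideanSpace ℝ (Fin d) → ℝ) : Set (EuclideanSpace ℝ (Fin d)) :=
  {x | ∃ ν fup flo, IsJumpPt f x ν fup flo}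

/-- `f` has bounded variation on `ℝ^d`: `f ∈ L¹` and its distributional derivative,
tested against `C¹` compactly supported vector fields of norm at most one via the
divergence, is bounded. -/
def IsBVFun (f : EuclideanSpace ℝ (Fin d) → ℝ) : Prop :=
  Integrable f volume ∧
    ∃ C : ℝ, ∀ φ : EuclideanSpace ℝ (Fin d) → EuclideanSpace ℝ (Fin d),
      ContDiff ℝ 1 φ → HasCompactSupport φ → (∀ x, ‖φ x‖ ≤ 1) →
      (∫ x, f x * LinearMap.trace ℝ (EuclideanSpace ℝ (Fin d))
          (fderiv ℝ φ x : EuclideanSpace ℝ (Fin d) →ₗ[ℝ] EuclideanSpace ℝ (Fin d))) ≤ C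

/-- `f` has locally bounded variation. -/
def IsBVLocFun (f : EuclideanSpace ℝ (Fin d) → ℝ) : Prop :=
  LocallyIntegrable f volume ∧
    ∀ R : ℝ, 0 < R →
      ∃ C : ℝ, ∀ φ : EuclideanSpace ℝ (Fin d) → EuclideanSpace ℝ (Fin d),
        ContDiff ℝ 1 φ → (∀ x ∉ Metric.ball 0 R, φ x = 0) → (∀ x, ‖φ x‖ ≤ 1) →
        (∫ x, f x * LinearMap.trace ℝ (EuclideanSpace ℝ (Fin d))
            (fderiv ℝ φ x : EuclideanSpace ℝ (Fin d) →ₗ[ℝ] EuclideanSpace ℝ (Fin d))) ≤ C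

/-- `f` is of generalized bounded variation: every truncation `τ_M f` is `BV_loc`. -/
def IsGBVFun (f : EuclideanSpace ℝ (Fin d) → ℝ) : Prop :=
  ∀ M : ℝ, 0 < M → IsBVLocFun fun x => max (-M) (min M (f x))

/-!
The argument is pointwise, so the exceptional set can be taken empty. On each of the two
half-spaces at `x` the approximate limit of `u₁ = b - v/2` is `b± - v±/2`, and the condition
`[b] = [v]/2` says exactly that these two values agree; hence `u₁` has a two-sided approximate
limit at `x`. A half-space has density `1/2` at a point of its boundary, so approximate limits
along it are unique, and both one-sided limits of a putative jump of `u₁` would have to equal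
this common value, contradicting `u₁^∧ < u₁^∨`.
-/

section ApproximateLimits

variable {x : EuclideanSpace ℝ (Fin d)} {A B : Set (EuclideanSpace ℝ (Fin d))}

theorem HasDensityZeroAt.mono (hB : HasDensityZeroAt B x) (hAB : A ⊆ B) :
    HasDensityZeroAt A x :=
  tendsto_of_tendsto_of_tendsto_of_le_of_le tendsto_const_nhds hB (fun _ => zero_le)
    fun _ => ENNReal.div_le_div_right (measure_mono (inter_subset_inter_left _ hAB)) _

theorem HasDensityZeroAt.union (hA : HasDensityZeroAt A x) (hB : HasDensityZeroAt B x) :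
    HasDensityZeroAt (A ∪ B) x := by
  have hsum := hA.add hB
  rw [add_zero] at hsum
  refine tendsto_of_tendsto_of_tendsto_of_le_of_le tendsto_const_nhds hsum
    (fun _ => zero_le) fun ρ => ?_
  rw [← ENNReal.add_div, union_inter_distrib_right]
  exact ENNReal.div_le_div_right (measure_union_le _ _) _

theorem not_hasDensityZeroAt_of_mul_le {c : ℝ≥0∞} (hc : c ≠ 0)
    (hA : ∀ ρ, c * volume (ball x ρ) ≤ volume (A ∩ ball x ρ)) :
    ¬ HasDensityZeroAt A x := by
  intro h0
  have hlower : ∀ᶠ ρ in nhdsWithin (0 : ℝ) (Ioi 0),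
      c ≤ volume (A ∩ ball x ρ) / volume (ball x ρ) := by
    filter_upwards [self_mem_nhdsWithin] with ρ hρ
    exact (ENNReal.le_div_iff_mul_le (Or.inl (measure_ball_pos volume x hρ).ne')
      (Or.inl measure_ball_lt_top.ne)).2 (hA ρ)
  exact hc (nonpos_iff_eq_zero.1 (ge_of_tendsto h0 hlower))

/-- `A` and its reflection through `x` cover every ball centred at `x`, so `A` fills at least half
of each. -/
theorem not_hasDensityZeroAt_of_reflect_compl (hA : ∀ y ∉ A, x + x - y ∈ A) :
    ¬ HasDensityZeroAt A x := by
  refine not_hasDensityZeroAt_of_mul_le (c := 2⁻¹) (by simp) fun ρ => ?_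
  rw [ENNReal.inv_mul_le_iff two_ne_zero ENNReal.ofNat_ne_top]
  set r : EuclideanSpace ℝ (Fin d) → EuclideanSpace ℝ (Fin d) := fun y => x + x - y
  have hr : volume (r ⁻¹' (A ∩ ball x ρ)) = volume (A ∩ ball x ρ) :=
    (Measure.measurePreserving_sub_left volume (x + x)).measure_preimage_emb
      (MeasurableEquiv.subLeft (x + x)).measurableEmbedding _
  have hcover : ball x ρ ⊆ (A ∩ ball x ρ) ∪ r ⁻¹' (A ∩ ball x ρ) := by
    intro y hy
    by_cases hyA : y ∈ A
    · exact Or.inl ⟨hyA, hy⟩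
    · refine Or.inr ⟨hA y hyA, ?_⟩
      rwa [mem_ball, dist_eq_norm, show r y - x = -(y - x) by simp only [r]; abel,
        norm_neg, ← dist_eq_norm]
  calc volume (ball x ρ) ≤ volume (A ∩ ball x ρ) + volume (r ⁻¹' (A ∩ ball x ρ)) :=
        (measure_mono hcover).trans (measure_union_le _ _)
    _ = 2 * volume (A ∩ ball x ρ) := by rw [hr, two_mul]

theorem not_hasDensityZeroAt_halfSpace (ν : EuclideanSpace ℝ (Fin d)) :
    ¬ HasDensityZeroAt {y | 0 ≤ ⟪y - x, ν⟫} x := by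
  refine not_hasDensityZeroAt_of_reflect_compl fun y hy => ?_
  simp only [mem_ofPred_eq, not_le] at hy ⊢
  rw [show x + x - y - x = -(y - x) by abel, inner_neg_left]
  linarith

theorem halfSpace_le_eq (ν : EuclideanSpace ℝ (Fin d)) :
    {y | ⟪y - x, ν⟫ ≤ 0} = {y | 0 ≤ ⟪y - x, -ν⟫} := by
  ext y
  simp [inner_neg_right]

variable {f g : EuclideanSpace ℝ (Fin d) → ℝ} {s t : ℝ}

theorem ApLim.mono (h : ApLim f B x t) (hAB : A ⊆ B) : ApLim f A x t :=
  fun ε hε => (h ε hε).mono fun _ hy => ⟨hAB hy.1, hy.2⟩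

theorem ApLim.union (hA : ApLim f A x t) (hB : ApLim f B x t) : ApLim f (A ∪ B) x t := by
  intro ε hε
  refine ((hA ε hε).union (hB ε hε)).mono ?_
  rintro y ⟨hy | hy, hε⟩
  exacts [Or.inl ⟨hy, hε⟩, Or.inr ⟨hy, hε⟩]

theorem ApLim.sub (hf : ApLim f A x s) (hg : ApLim g A x t) :
    ApLim (fun y => f y - g y) A x (s - t) := by
  intro ε hε
  refine ((hf (ε / 2) (half_pos hε)).union (hg (ε / 2) (half_pos hε))).mono ?_
  rintro y ⟨hy, hε⟩
  have htri : |f y - g y - (s - t)| ≤ |f y - s| + |g y - t| := by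
    rw [show f y - g y - (s - t) = (f y - s) - (g y - t) by ring]
    exact abs_sub _ _
  by_cases hfy : ε / 2 < |f y - s|
  · exact Or.inl ⟨hy, hfy⟩
  · exact Or.inr ⟨hy, by linarith⟩

theorem ApLim.div_const (h : ApLim f A x t) (c : ℝ) :
    ApLim (fun y => f y / c) A x (t / c) := by
  intro ε hε
  rcases eq_or_ne c 0 with rfl | hc
  · refine (h ε hε).mono fun y hy => ?_
    simp only [div_zero, sub_self, abs_zero] at hy
    exact absurd hy.2 hε.not_gt
  · refine (h (ε * |c|) (by positivity)).mono fun y ⟨hy, hε⟩ => ⟨hy, ?_⟩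
    rwa [← sub_div, abs_div, lt_div_iff₀ (abs_pos.2 hc)] at hε

theorem ApLim.unique (hA : ¬ HasDensityZeroAt A x) (hs : ApLim f A x s) (ht : ApLim f A x t) :
    s = t := by
  by_contra hne
  have hε : 0 < |s - t| / 3 := by positivity
  refine hA (((hs _ hε).union (ht _ hε)).mono fun y hy => ?_)
  have htri : |s - t| ≤ |f y - s| + |f y - t| := by
    rw [show s - t = (f y - t) - (f y - s) by ring, add_comm]
    exact abs_sub _ _
  by_cases hfy : |s - t| / 3 < |f y - s|
  · exact Or.inl ⟨hy, hfy⟩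
  · exact Or.inr ⟨hy, by linarith [abs_pos.2 (sub_ne_zero.2 hne)]⟩

theorem ApLim.univ_of_halfSpaces {ν : EuclideanSpace ℝ (Fin d)}
    (hup : ApLim f {y | 0 ≤ ⟪y - x, ν⟫} x t) (hlo : ApLim f {y | ⟪y - x, ν⟫ ≤ 0} x t) :
    ApLim f univ x t :=
  (hup.union hlo).mono fun y _ => le_total 0 ⟪y - x, ν⟫

theorem notMem_jumpSet_of_apLim_univ (h : ApLim f univ x t) : x ∉ jumpSet f := by
  rintro ⟨ν, fup, flo, -, hlt, hup, hlo⟩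
  have hup_eq : fup = t := hup.unique (not_hasDensityZeroAt_halfSpace ν) (h.mono (subset_univ _))
  have hlo_eq : flo = t := by
    rw [halfSpace_le_eq] at hlo
    exact hlo.unique (not_hasDensityZeroAt_halfSpace (-ν)) (h.mono (subset_univ _))
  exact hlt.ne (hlo_eq.trans hup_eq.symm)

end ApproximateLimits

theorem not_jumpPt_of_jump_eq_half_general
    (v b : EuclideanSpace ℝ (Fin d) → ℝ) :
    ∃ S : Set (EuclideanSpace ℝ (Fin d)), μH[(d : ℝ) - 1] S = 0 ∧
      ∀ x ∉ S, ∀ ν : EuclideanSpace ℝ (Fin d), ∀ vup vlo bup blo : ℝ,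
        IsJumpPt v x ν vup vlo → IsJumpPt b x ν bup blo →
        bup - blo = (vup - vlo) / 2 →
        x ∉ jumpSet fun y => b y - v y / 2 := by
  refine ⟨∅, measure_empty, fun x _ ν vup vlo bup blo ⟨_, _, hvup, hvlo⟩ ⟨_, _, hbup, hblo⟩ hjump =>
    ?_⟩
  have hlo : ApLim (fun y => b y - v y / 2) {y | ⟪y - x, ν⟫ ≤ 0} x (bup - vup / 2) := by
    convert hblo.sub (hvlo.div_const 2) using 1
    linarith
  exact notMem_jumpSet_of_apLim_univ
    ((hbup.sub (hvup.div_const 2)).univ_of_halfSpaces hlo)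

/-- If `v ∈ BV ∩ L^∞` is nonnegative and `b ∈ GBV`, with `u₁ = b - v/2`, then for
`H^{d-1}`-a.e. `x ∈ J_v ∩ J_b` with `ν_b(x) = ν_v(x)` and `[b](x) = [v](x)/2`,
the point `x` is not a jump point of `u₁`. (Here `d = n - 1`, so `H^{d-1} = H^{n-2}`.) -/
theorem not_jumpPt_of_jump_eq_half
    (v b : EuclideanSpace ℝ (Fin d) → ℝ)
    (hvBV : IsBVFun v)
    (hvLinf : ∃ M : ℝ, ∀ᵐ x : EuclideanSpace ℝ (Fin d) ∂volume, |v x| ≤ M)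
    (hv0 : ∀ x, 0 ≤ v x)
    (hbGBV : IsGBVFun b) :
    ∃ S : Set (EuclideanSpace ℝ (Fin d)), μH[(d : ℝ) - 1] S = 0 ∧
      ∀ x ∉ S, ∀ ν : EuclideanSpace ℝ (Fin d), ∀ vup vlo bup blo : ℝ,
        IsJumpPt v x ν vup vlo → IsJumpPt b x ν bup blo →
        bup - blo = (vup - vlo) / 2 →
        x ∉ jumpSet fun y => b y - v y / 2 :=
  not_jumpPt_of_jump_eq_half_general v b
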